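/- Let N be the implication filter of an MV-algebra generated by the set of counits (the Conrad filter). Then for every prime implication filter P, either N ⊆ P or P ⊆ N. -/

import Mathlib

/-- An MV-algebra `(α, ⊕, ¬, 0)` with the standard axioms. -/
class MV (α : Type*) extends Add α, Neg α, Zero α where
  add_assoc : ∀ a b c : α, a + (b + c) = (a + b) + c
  add_comm : ∀ a b : α, a + b = b + a
  add_zero : ∀ a : α, a + 0 = a
  neg_neg : ∀ a : α, - -a = a
  add_neg_zero : ∀ a : α, a + -(0 : α) = -(0 : α)
  luk : ∀ a b : α, -(-a + b) + b = -(-b + a) + a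

namespace MV

variable {α : Type*} [MV α]

/-- The top element `1 = ¬0`. -/
def one (α : Type*) [MV α] : α := -(0 : α)

/-- Implication `x → y = ¬x ⊕ y`. -/
def imp (a b : α) : α := -a + b

/-- Strong conjunction `x ⊗ y = ¬(¬x ⊕ ¬y)`. -/
def otimes (a b : α) : α := -(-a + -b)

/-- Join `x ∨ y = (x → y) → y`. -/
def sup (a b : α) : α := imp (imp a b) b

/-- Meet `x ∧ y = ¬(¬x ∨ ¬y)`. -/
def inf (a b : α) : α := -(sup (-a) (-b))

/-- Order: `x ≤ y` iff `x → y = 1`. -/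
def le (a b : α) : Prop := imp a b = one α

/-- Strict order. -/
def lt (a b : α) : Prop := le a b ∧ a ≠ b

/-- `n`-fold `⊗`-power. -/
def pow (a : α) : ℕ → α
  | 0 => one α
  | n + 1 => otimes a (pow a n)

/-- An implication filter: a lattice filter closed under `⊗`. -/
def IsImpFilter (F : Set α) : Prop :=
  one α ∈ F ∧ (∀ x ∈ F, ∀ y : α, le x y → y ∈ F) ∧
    (∀ x ∈ F, ∀ y ∈ F, inf x y ∈ F) ∧ (∀ x ∈ F, ∀ y ∈ F, otimes x y ∈ F)

/-- A prime implication filter: proper and `x ∨ y ∈ F → x ∈ F ∨ y ∈ F`. -/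
def IsPrime (F : Set α) : Prop :=
  IsImpFilter F ∧ F ≠ Set.univ ∧ ∀ x y : α, sup x y ∈ F → x ∈ F ∨ y ∈ F

/-- A minimal prime implication filter. -/
def IsMinimalPrime (F : Set α) : Prop :=
  IsPrime F ∧ ∀ G : Set α, IsPrime G → G ⊆ F → G = F

/-- A maximal proper implication filter. -/
def IsMaximal (F : Set α) : Prop :=
  IsImpFilter F ∧ F ≠ Set.univ ∧
    ∀ G : Set α, IsImpFilter G → G ≠ Set.univ → F ⊆ G → G = F

/-- A counit: `u < 1` joining to `1` with some `v < 1`. -/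
def IsCounit (u : α) : Prop :=
  lt u (one α) ∧ ∃ v : α, lt v (one α) ∧ sup u v = one α

/-- The implication filter generated by a set. -/
def gen (S : Set α) : Set α := ⋂₀ {F : Set α | IsImpFilter F ∧ S ⊆ F}

/-- The Conrad filter: the implication filter generated by all counits. -/
def conrad (α : Type*) [MV α] : Set α := gen {u : α | IsCounit u}

/-- The localizing filter `ℓ(P)`, generated by `{x → p : p ∈ P, x ∉ P}`. -/
def locFilter (P : Set α) : Set α :=
  gen {z : α | ∃ x : α, x ∉ P ∧ ∃ p ∈ P, z = imp x p}

end MV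

open MV

/-!
If every counit lies in `P`, then `N ⊆ P`. Otherwise fix a counit `u ∉ P`, with `u ∨ v = 1` and
`v < 1`, and let `p ∈ P`. Whenever `a ∨ b = 1` with `b < 1`, the element `a` is `1` or a counit,
so `a ∈ N`. This puts `p ∨ u` in `N` (take `b = v`) and, by prelinearity
`(u → p) ∨ (p → u) = 1`, also `u → p` (take `b = p → u`,
which is `< 1` since `p ≤ u` would put `u` in `P`).
Hence `p ≥ (p ∨ u) ⊗ (u → p)` lies in `N`.
-/

namespace MV

section Arithmetic

variable {α : Type*} [MV α] {a b c : α}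

local instance : Std.Associative (fun a b : α => a + b) := ⟨fun a b c => (MV.add_assoc a b c).symm⟩

local instance : Std.Commutative (fun a b : α => a + b) := ⟨MV.add_comm⟩

lemma add_one (a : α) : a + one α = one α := add_neg_zero a

lemma neg_one : -(one α) = (0 : α) := MV.neg_neg 0

lemma zero_add (a : α) : (0 : α) + a = a := by
  rw [MV.add_comm]; exact MV.add_zero a

lemma neg_add_self (a : α) : -a + a = one α := by
  simpa only [neg_one, zero_add, add_one] using luk (one α) a

lemma add_neg_self (a : α) : a + -a = one α := by
  rw [MV.add_comm]; exact neg_add_self a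

lemma le_refl (a : α) : le a a := neg_add_self a

lemma le_one (a : α) : le a (one α) := add_one (-a)

lemma eq_one_of_one_le (h : le (one α) a) : a = one α := by
  rwa [le, imp, neg_one, zero_add] at h

lemma sup_comm (a b : α) : MV.sup a b = MV.sup b a := luk a b

lemma sup_eq_right (h : le a b) : MV.sup a b = b := by
  rw [MV.sup, imp, imp, show -a + b = one α from h, neg_one, zero_add]

lemma le_trans (hab : le a b) (hbc : le b c) : le a c := by
  have hc : c = -(-c + b) + b := (sup_eq_right hbc).symm.trans (luk b c)
  change -a + c = one α
  rw [hc, show -a + (-(-c + b) + b) = -(-c + b) + (-a + b) by ac_rfl,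
    show -a + b = one α from hab, add_one]

lemma add_le_add_right (h : le a b) (c : α) : le (a + c) (b + c) := by
  have hb : b = -(-b + a) + a := (sup_eq_right h).symm.trans (luk a b)
  change -(a + c) + (b + c) = one α
  rw [hb, show -(a + c) + ((-(-b + a) + a) + c) = -(-b + a) + (-(a + c) + (a + c)) by ac_rfl,
    neg_add_self, add_one]

lemma add_le_add_left (h : le a b) (c : α) : le (c + a) (c + b) := by
  rw [MV.add_comm c a, MV.add_comm c b]
  exact add_le_add_right h c

lemma neg_le_neg (h : le a b) : le (-b) (-a) := by
  change -(-b) + -a = one α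
  rw [MV.neg_neg, MV.add_comm]
  exact h

lemma le_sup_right (a b : α) : le b (MV.sup a b) := by
  change -b + (-(-a + b) + b) = one α
  rw [show -b + (-(-a + b) + b) = -(-a + b) + (-b + b) by ac_rfl, neg_add_self, add_one]

lemma le_sup_left (a b : α) : le a (MV.sup a b) := sup_comm b a ▸ le_sup_right b a

lemma sup_le (hac : le a c) (hbc : le b c) : le (MV.sup a b) c := by
  have h := add_le_add_right (neg_le_neg (add_le_add_right (neg_le_neg hac) b)) b
  rwa [← (sup_eq_right hbc).symm.trans (luk b c)] at h

lemma otimes_comm (a b : α) : otimes a b = otimes b a := by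
  rw [otimes, otimes, MV.add_comm]

lemma otimes_le_iff_le_imp : le (otimes a b) c ↔ le a (imp b c) := by
  rw [le, le, imp, imp, imp, otimes, MV.neg_neg, MV.add_assoc]

lemma otimes_imp_self (a b : α) : otimes a (imp a b) = MV.inf a b := by
  have h := luk (-b) (-a)
  rw [MV.neg_neg, MV.neg_neg] at h
  rw [otimes, imp, MV.inf, MV.sup, imp, imp, MV.neg_neg, ← h, MV.add_comm b (-a),
    MV.add_comm (-(-a + b)) (-a)]

lemma inf_comm (a b : α) : MV.inf a b = MV.inf b a := by
  rw [MV.inf, MV.inf, sup_comm]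

lemma otimes_add_le (x y z : α) : le (otimes x (y + z)) (otimes x y + z) := by
  have hx : le y (otimes x y + -x) := by
    have h := le_sup_left y (-x)
    rwa [MV.sup, imp, imp, MV.add_comm (-y) (-x)] at h
  have hy : le (-y) (-(y + z) + z) := by
    have h := le_sup_left (-y) z
    rwa [MV.sup, imp, imp, MV.neg_neg] at h
  have h := le_trans (add_le_add_right hx (-y)) (add_le_add_left hy (otimes x y + -x))
  rw [add_neg_self] at h
  change -(-(-x + -(y + z))) + (otimes x y + z) = one α
  rw [MV.neg_neg, show (-x + -(y + z)) + (otimes x y + z)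
    = (otimes x y + -x) + (-(y + z) + z) by ac_rfl]
  exact eq_one_of_one_le h

lemma otimes_imp_add_neg_imp (a b : α) : otimes a (imp a b) + -(imp a b) = a := by
  have h : le (-(imp a b)) a := by
    change -(-(-a + b)) + a = one α
    rw [MV.neg_neg, show (-a + b) + a = b + (-a + a) by ac_rfl, neg_add_self, add_one]
  change MV.sup a (-(imp a b)) = a
  rw [sup_comm, sup_eq_right h]

lemma sup_imp_imp_eq_one (a b : α) : MV.sup (imp a b) (imp b a) = one α := by
  have h := otimes_add_le b (imp b a) (-(imp a b))
  rw [otimes_imp_self, inf_comm, ← otimes_imp_self a b, otimes_imp_add_neg_imp,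
    MV.add_comm, otimes_comm] at h
  exact otimes_le_iff_le_imp.mp h

end Arithmetic

section Generation

variable {α : Type*} [MV α] {S F : Set α}

lemma subset_gen (S : Set α) : S ⊆ gen S :=
  fun _ hx => Set.mem_sInter.mpr fun _ hF => hF.2 hx

lemma gen_subset (hF : IsImpFilter F) (hSF : S ⊆ F) : gen S ⊆ F :=
  Set.sInter_subset_of_mem ⟨hF, hSF⟩

lemma isImpFilter_gen (S : Set α) : IsImpFilter (gen S) := by
  simp only [gen, IsImpFilter, Set.mem_sInter]
  refine ⟨fun F hF => hF.1.1, fun x hx y hxy F hF => hF.1.2.1 x (hx F hF) y hxy,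
    fun x hx y hy F hF => hF.1.2.2.1 x (hx F hF) y (hy F hF),
    fun x hx y hy F hF => hF.1.2.2.2 x (hx F hF) y (hy F hF)⟩

end Generation

section Conrad

variable {α : Type*} [MV α]

lemma mem_conrad_of_sup_eq_one {a b : α} (hb : b ≠ one α) (h : MV.sup a b = one α) :
    a ∈ conrad α := by
  by_cases ha : a = one α
  · exact ha ▸ (isImpFilter_gen _).1
  · exact subset_gen _ ⟨⟨le_one a, ha⟩, b, ⟨le_one b, hb⟩, h⟩

lemma sup_mem_conrad_of_isCounit {u : α} (hu : IsCounit u) (p : α) : MV.sup p u ∈ conrad α := by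
  obtain ⟨-, v, ⟨-, hv⟩, huv⟩ := hu
  refine mem_conrad_of_sup_eq_one hv (eq_one_of_one_le ?_)
  rw [← huv]
  exact sup_le (le_trans (le_sup_right p u) (le_sup_left _ v)) (le_sup_right _ v)

lemma imp_mem_conrad_of_not_le {u p : α} (h : ¬ le p u) : imp u p ∈ conrad α :=
  mem_conrad_of_sup_eq_one h (sup_imp_imp_eq_one u p)

lemma mem_conrad_of_not_le_isCounit {u p : α} (hu : IsCounit u) (h : ¬ le p u) :
    p ∈ conrad α := by
  have hN := isImpFilter_gen {u : α | IsCounit u}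
  have hle : le (otimes (MV.sup p u) (imp u p)) p := by
    rw [otimes_le_iff_le_imp, sup_comm]
    exact le_refl _
  exact hN.2.1 _ (hN.2.2.2 _ (sup_mem_conrad_of_isCounit hu p) _ (imp_mem_conrad_of_not_le h)) p hle

theorem conrad_subset_or_subset_conrad {P : Set α} (hP : IsImpFilter P) :
    conrad α ⊆ P ∨ P ⊆ conrad α := by
  by_cases h : {u : α | IsCounit u} ⊆ P
  · exact Or.inl (gen_subset hP h)
  · obtain ⟨u, hu, huP⟩ := Set.not_subset.mp h
    exact Or.inr fun p hp => mem_conrad_of_not_le_isCounit hu fun hpu => huP (hP.2.1 p hp u hpu)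

end Conrad

end MV

/-- Every prime implication filter is comparable to the Conrad filter. -/
theorem conrad_comparable {α : Type*} [MV α] (P : Set α) (hP : IsPrime P) :
    conrad α ⊆ P ∨ P ⊆ conrad α :=
  conrad_subset_or_subset_conrad hP.1
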